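/- Let f_n minimize (up to tolerance β) the empirical squared loss on dataset D_n, and suppose: (i) whenever the model is updated at episodes n_i < n_{i+1}, one has ∑_{(z,y) ∈ D_{n_{i+1}} \ D_{n_i}} [(f_{n_i}(z) − y)² − (f*(z) − y)²] ≥ 3β; and (ii) pointwise, (f(z) − y)² − (f*(z) − y)² ≤ (3/2)(f(z) − f*(z))² + β/l over the new data. Then between consecutive updates ∑_{n = n_i}^{n_{i+1}−1} (f_n(z_n) − f*(z_n))² ≥ β, so if the total sum ∑_{n=1}^N (f_n(z_n) − f*(z_n))² ≤ U, the number of updates l satisfies l ≤ U/β. -/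

import Mathlib

open Finset

/-!
Since `f` is frozen on each block `[n_i, n_{i+1})`, conditions (i) and (ii) give
`3β ≤ (3/2) S_i + β` for the block error `S_i`, so `S_i ≥ 4β/3 ≥ β`. The blocks tile
`[n_0, n_l) ⊆ [0, N)`, so summing over the `l` blocks bounds `l β` by the total error.
-/

section Blocks

variable {M : Type*} [AddCommMonoid M]

theorem sum_sum_Ico_castSucc_succ {l : ℕ} (nt : Fin (l + 1) → ℕ) (hmono : Monotone nt)
    (g : ℕ → M) :
    ∑ i : Fin l, ∑ n ∈ Ico (nt i.castSucc) (nt i.succ), g n =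
      ∑ n ∈ Ico (nt 0) (nt (Fin.last l)), g n := by
  induction l with
  | zero => simp
  | succ l ih =>
    rw [Fin.sum_univ_castSucc]
    simp only [Fin.succ_castSucc]
    have hinit := ih (nt ∘ Fin.castSucc) (hmono.comp fun _ _ => Fin.castSucc_le_castSucc_iff.mpr)
    simp only [Function.comp_apply, Fin.castSucc_zero] at hinit
    rw [hinit, Fin.succ_last]
    exact sum_Ico_consecutive g (hmono (Fin.zero_le _)) (hmono (Fin.le_last _))

variable [PartialOrder M] [IsOrderedAddMonoid M]

theorem nsmul_le_sum_range_of_le_sum_Ico {l N : ℕ} (nt : Fin (l + 1) → ℕ)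
    (hmono : Monotone nt) (hlast : nt (Fin.last l) ≤ N) {g : ℕ → M} (hg : ∀ n, 0 ≤ g n)
    {β : M} (hblock : ∀ i : Fin l, β ≤ ∑ n ∈ Ico (nt i.castSucc) (nt i.succ), g n) :
    l • β ≤ ∑ n ∈ range N, g n :=
  calc l • β ≤ ∑ i : Fin l, ∑ n ∈ Ico (nt i.castSucc) (nt i.succ), g n := by
        simpa using card_nsmul_le_sum univ _ β fun i _ => hblock i
    _ = ∑ n ∈ Ico (nt 0) (nt (Fin.last l)), g n := sum_sum_Ico_castSucc_succ nt hmono g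
    _ ≤ ∑ n ∈ range N, g n := by
        rw [range_eq_Ico]
        exact sum_le_sum_of_subset_of_nonneg (Ico_subset_Ico (Nat.zero_le _) hlast)
          fun n _ _ => hg n

end Blocks

/-- Switching-cost counting argument: between consecutive update times each block
contributes at least `β` to the on-sequence squared error, hence the number of
updates `l` is at most `U/β` whenever the total on-sequence squared error is `≤ U`. -/
theorem switching_cost_bound
    {Z : Type*} (l N : ℕ) (nt : Fin (l + 1) → ℕ) (hmono : StrictMono nt)
    (hlast : nt (Fin.last l) ≤ N)
    (f : ℕ → Z → ℝ) (fstar : Z → ℝ) (z : ℕ → Z) (y : ℕ → ℝ) (β U : ℝ)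
    (hβ : 0 < β)
    -- `f` is piecewise constant between updates
    (hconst : ∀ i : Fin l, ∀ n, nt i.castSucc ≤ n → n < nt i.succ →
      f n = f (nt i.castSucc))
    -- (i) each update is triggered by an excess empirical loss of at least `3β` on new data
    (hgap : ∀ i : Fin l,
      3 * β ≤ ∑ n ∈ Finset.Ico (nt i.castSucc) (nt i.succ),
        ((f (nt i.castSucc) (z n) - y n) ^ 2 - (fstar (z n) - y n) ^ 2)) :
    -- (ii) the empirical excess loss on new data is at most `(3/2)` times the squared
    -- prediction error plus `β`
    (∀ i : Fin l,
      ∑ n ∈ Finset.Ico (nt i.castSucc) (nt i.succ),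
          ((f (nt i.castSucc) (z n) - y n) ^ 2 - (fstar (z n) - y n) ^ 2) ≤
        (3 / 2) * (∑ n ∈ Finset.Ico (nt i.castSucc) (nt i.succ),
          (f (nt i.castSucc) (z n) - fstar (z n)) ^ 2) + β) →
    -- then each inter-update block contributes at least `β`, and `l ≤ U/β` when the
    -- total on-sequence squared error is at most `U`
    (∀ i : Fin l,
        β ≤ ∑ n ∈ Finset.Ico (nt i.castSucc) (nt i.succ),
          (f n (z n) - fstar (z n)) ^ 2) ∧
      ((∑ n ∈ Finset.range N, (f n (z n) - fstar (z n)) ^ 2 ≤ U) →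
        (l : ℝ) ≤ U / β) := by
  intro hexcess
  have hblock : ∀ i : Fin l,
      β ≤ ∑ n ∈ Ico (nt i.castSucc) (nt i.succ), (f n (z n) - fstar (z n)) ^ 2 := by
    intro i
    have hfrozen : ∑ n ∈ Ico (nt i.castSucc) (nt i.succ), (f n (z n) - fstar (z n)) ^ 2 =
        ∑ n ∈ Ico (nt i.castSucc) (nt i.succ), (f (nt i.castSucc) (z n) - fstar (z n)) ^ 2 :=
      sum_congr rfl fun n hn => by rw [hconst i n (mem_Ico.1 hn).1 (mem_Ico.1 hn).2]
    linarith [hgap i, hexcess i]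
  refine ⟨hblock, fun hU => ?_⟩
  rw [le_div_iff₀ hβ, ← nsmul_eq_mul]
  exact (nsmul_le_sum_range_of_le_sum_Ico nt hmono.monotone hlast (fun n => sq_nonneg _)
    hblock).trans hU
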